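/- (Barycentric invariance) For every finite abstract simplicial complex G and every m ≥ 1, w_m(G_1) = w_m(G), where G_1 is the Barycentric refinement of G. -/

import Mathlib

open Finset

variable {α : Type*} [DecidableEq α]

/-- The star `U(x) = {y ∈ G : x ⊆ y}` of a simplex `x` in the complex `G`. -/
def starC (G : Finset (Finset α)) (x : Finset α) : Finset (Finset α) :=
  G.filter (fun y => x ⊆ y)

/-- The unit ball `B(x)`: the closure of the star `U(x)`. -/
def ballC (G : Finset (Finset α)) (x : Finset α) : Finset (Finset α) :=
  G.filter (fun z => ∃ y ∈ G, x ⊆ y ∧ z ⊆ y)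

/-- The unit sphere `S(x) = B(x) \ U(x)`. -/
def sphereC (G : Finset (Finset α)) (x : Finset α) : Finset (Finset α) :=
  ballC G x \ starC G x

/-- `G` is a finite abstract simplicial complex: a finite set of nonempty finite sets
closed under taking nonempty subsets. -/
def IsComplex (G : Finset (Finset α)) : Prop :=
  (∀ x ∈ G, x.Nonempty) ∧ ∀ x ∈ G, ∀ y, y ⊆ x → y.Nonempty → y ∈ G

/-- The intersection `x_1 ∩ ... ∩ x_m` of a tuple of finite sets (for `m ≥ 1`). -/
def interTuple {m : ℕ} (X : Fin m → Finset α) : Finset α :=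
  (Finset.univ.sup X).filter (fun v => ∀ j, v ∈ X j)

/-- The `m`-th characteristic `w_m(A)`. -/
def wm (m : ℕ) (A : Finset (Finset α)) : ℤ :=
  ∑ X ∈ Fintype.piFinset (fun _ : Fin m => A),
    if interTuple X ∈ A then ∏ j, (-1 : ℤ) ^ ((X j).card - 1) else 0

/-- `U` is open in the star topology on `G`: a union of stars. -/
def SCOpen (G U : Finset (Finset α)) : Prop :=
  ∃ T ⊆ G, U = T.biUnion (fun x => starC G x)

/-- The Barycentric refinement `G₁` of `G`: the complex of all nonempty chains of
simplices of `G` ordered by inclusion (the order complex of `G`). -/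
def bary (G : Finset (Finset ℕ)) : Finset (Finset (Finset ℕ)) :=
  G.powerset.filter (fun c => c.Nonempty ∧ ∀ x ∈ c, ∀ y ∈ c, x ⊆ y ∨ y ⊆ x)

/-!
Expanding the indicator of `x₁ ∩ ⋯ ∩ xₘ ∈ A` as the Euler characteristic of the faces of the
intersection gives `w_m(A) = ∑_{z ∈ A} ω(z) χ(U(z))^m`, where `ω(z) = (-1)^dim z` and `χ(U(z))` is
the Euler characteristic of the star of `z`. In the refinement, the chains extending a chain `d`
with top element `x` split at `x` into a chain of the open interval `(∅, x)` of the Boolean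
lattice and a chain of simplices above `x`. By Philip Hall's theorem the signed count of chains of
an interval `(a, b)` extending a given one is `-μ(a, b) = (-1)^(|a|+|b|+1)`, whatever the given
chain; hence `χ(U(d)) = χ(U(x))`, and the chains with top `x` have total weight `ω(x)`.
-/

section Chains

variable {β : Type*} [PartialOrder β]

theorem Finset.exists_isGreatest_of_isChain {c : Finset β} (hc : IsChain (· ≤ ·) (c : Set β))
    (hne : c.Nonempty) : ∃ x, IsGreatest (c : Set β) x := by
  obtain ⟨x, hx⟩ := c.exists_maximal hne
  exact ⟨x, hx.prop, fun y hy => (hc.total hx.prop hy).elim (hx.le_of_ge hy) id⟩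

theorem IsChain.insert_filter_lt_union_filter_gt [DecidableEq β] [DecidableLT β] {c : Finset β}
    (hc : IsChain (· ≤ ·) (c : Set β)) {w : β} (hw : w ∈ c) :
    insert w ({y ∈ c | y < w} ∪ {y ∈ c | w < y}) = c := by
  ext y
  simp only [mem_insert, mem_union, mem_filter]
  refine ⟨by rintro (rfl | ⟨hy, -⟩ | ⟨hy, -⟩) <;> assumption, fun hy => ?_⟩
  rcases hc.total hy hw with h | h
  · rcases h.lt_or_eq with h | h <;> simp [*]
  · rcases h.lt_or_eq with h | h <;> simp [*]

theorem IsChain.insert_union_of_lt {s t : Set β} {w : β} (hs : IsChain (· ≤ ·) s)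
    (ht : IsChain (· ≤ ·) t) (hsw : ∀ y ∈ s, y < w) (hwt : ∀ y ∈ t, w < y) :
    IsChain (· ≤ ·) (insert w (s ∪ t)) := by
  have hst : IsChain (· ≤ ·) (s ∪ t) := by
    rintro a (ha | ha) b (hb | hb) hab
    · exact hs ha hb hab
    · exact Or.inl ((hsw a ha).trans (hwt b hb)).le
    · exact Or.inr ((hsw b hb).trans (hwt a ha)).le
    · exact ht ha hb hab
  exact hst.insert fun b hb _ => hb.elim (fun hb => Or.inr (hsw b hb).le) fun hb => Or.inl (hwt b hb).le

variable [DecidableLE β]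

def chains (P : Finset β) : Finset (Finset β) :=
  {c ∈ P.powerset | ∀ a ∈ c, ∀ b ∈ c, a ≤ b ∨ b ≤ a}

theorem mem_chains {P c : Finset β} : c ∈ chains P ↔ c ⊆ P ∧ IsChain (· ≤ ·) (c : Set β) := by
  simp only [chains, mem_filter, mem_powerset]
  exact and_congr_right fun _ => ⟨fun h a ha b hb _ => h a ha b hb, fun h a ha b hb => h.total ha hb⟩

variable [DecidableEq β]

theorem sum_chains_erase_empty {M : Type*} [AddCommMonoid M] (P : Finset β) (f : Finset β → M) :
    ∑ c ∈ (chains P).erase ∅, f c = ∑ x ∈ P, ∑ c ∈ chains {y ∈ P | y ≤ x} with x ∈ c, f c := by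
  rw [← sum_biUnion]
  · congr 1
    ext c
    simp only [mem_erase, mem_biUnion, mem_filter, mem_chains, subset_iff, ← nonempty_iff_ne_empty]
    constructor
    · rintro ⟨hne, hcP, hc⟩
      obtain ⟨x, hxc, hx⟩ := exists_isGreatest_of_isChain hc hne
      exact ⟨x, hcP hxc, ⟨fun y hy => ⟨hcP hy, hx hy⟩, hc⟩, hxc⟩
    · rintro ⟨x, -, ⟨hcP, hc⟩, hxc⟩
      exact ⟨⟨x, hxc⟩, fun y hy => (hcP hy).1, hc⟩
  · intro x _ x' _ hne
    refine disjoint_left.2 fun c hc hc' => hne ?_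
    simp only [mem_filter, mem_chains] at hc hc'
    exact le_antisymm (mem_filter.1 (hc'.1.1 hc.2)).2 (mem_filter.1 (hc.1.1 hc'.2)).2

def chainSum (P d : Finset β) : ℤ :=
  ∑ c ∈ chains P with d ⊆ c, (-1) ^ #c

variable [DecidableLT β]

theorem chainSum_eq_neg_mul {P d : Finset β} {w : β} (hd : IsChain (· ≤ ·) (d : Set β))
    (hwd : w ∈ d) (hwP : w ∈ P) :
    chainSum P d = -(chainSum {y ∈ P | y < w} {y ∈ d | y < w} *
      chainSum {y ∈ P | w < y} {y ∈ d | w < y}) := by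
  rw [chainSum, chainSum, chainSum, sum_mul_sum, ← sum_product', ← sum_neg_distrib]
  refine sum_nbij' (fun c => ({y ∈ c | y < w}, {y ∈ c | w < y})) (fun p => insert w (p.1 ∪ p.2))
    ?_ ?_ ?_ ?_ ?_
  · intro c hc
    simp only [mem_filter, mem_chains, mem_product] at hc ⊢
    obtain ⟨⟨hcP, hc⟩, hdc⟩ := hc
    exact ⟨⟨⟨filter_subset_filter _ hcP, hc.mono (coe_subset.2 (filter_subset _ _))⟩,
      filter_subset_filter _ hdc⟩, ⟨⟨filter_subset_filter _ hcP,
      hc.mono (coe_subset.2 (filter_subset _ _))⟩, filter_subset_filter _ hdc⟩⟩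
  · rintro ⟨c₁, c₂⟩ hp
    simp only [mem_filter, mem_chains, mem_product] at hp ⊢
    obtain ⟨⟨⟨hc₁P, hc₁⟩, hdc₁⟩, ⟨hc₂P, hc₂⟩, hdc₂⟩ := hp
    have h₁ : ∀ y ∈ c₁, y < w := fun y hy => (mem_filter.1 (hc₁P hy)).2
    have h₂ : ∀ y ∈ c₂, w < y := fun y hy => (mem_filter.1 (hc₂P hy)).2
    refine ⟨⟨insert_subset hwP (union_subset (hc₁P.trans (filter_subset _ _))
      (hc₂P.trans (filter_subset _ _))), ?_⟩, ?_⟩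
    · rw [coe_insert, coe_union]
      exact hc₁.insert_union_of_lt hc₂ h₁ h₂
    · rw [← hd.insert_filter_lt_union_filter_gt hwd]
      exact insert_subset_insert _ (union_subset_union hdc₁ hdc₂)
  · intro c hc
    simp only [mem_filter, mem_chains] at hc
    exact hc.1.2.insert_filter_lt_union_filter_gt (hc.2 hwd)
  · rintro ⟨c₁, c₂⟩ hp
    simp only [mem_filter, mem_chains, mem_product] at hp
    have h₁ : ∀ y ∈ c₁, y < w := fun y hy => (mem_filter.1 (hp.1.1.1 hy)).2
    have h₂ : ∀ y ∈ c₂, w < y := fun y hy => (mem_filter.1 (hp.2.1.1 hy)).2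
    simp only [filter_insert, lt_irrefl, if_false, filter_union]
    rw [filter_true_of_mem h₁, filter_false_of_mem fun y hy => lt_asymm (h₂ y hy),
      filter_false_of_mem fun y hy => lt_asymm (h₁ y hy), filter_true_of_mem h₂, union_empty,
      empty_union]
  · intro c hc
    simp only [mem_filter, mem_chains] at hc
    conv_lhs => rw [← hc.1.2.insert_filter_lt_union_filter_gt (hc.2 hwd)]
    rw [card_insert_of_notMem (by simp), card_union_of_disjoint
      (disjoint_filter.2 fun y _ h h' => lt_asymm h h'), pow_succ, pow_add]
    ring

theorem chainSum_filter_le_singleton {P : Finset β} {x : β} (hx : x ∈ P) :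
    chainSum {y ∈ P | y ≤ x} {x} = -chainSum {y ∈ P | y < x} ∅ := by
  rw [chainSum_eq_neg_mul (P := {y ∈ P | y ≤ x}) (by simp) (mem_singleton_self x)
    (mem_filter.2 ⟨hx, le_rfl⟩)]
  have hlt : {y ∈ {y ∈ P | y ≤ x} | y < x} = {y ∈ P | y < x} := by
    rw [filter_filter]
    exact filter_congr fun y _ => and_iff_right_of_imp le_of_lt
  have hgt : {y ∈ {y ∈ P | y ≤ x} | x < y} = ∅ :=
    filter_eq_empty_iff.2 fun y hy => (mem_filter.1 hy).2.not_gt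
  simp [hlt, hgt, filter_singleton, chainSum, chains]

theorem chainSum_empty (P : Finset β) :
    chainSum P ∅ = 1 - ∑ x ∈ P, chainSum {y ∈ P | y < x} ∅ := by
  have h : chainSum P ∅ = 1 + ∑ c ∈ (chains P).erase ∅, (-1) ^ #c := by
    rw [chainSum, filter_true_of_mem fun _ _ => empty_subset _,
      ← add_sum_erase _ _ (mem_chains.2 ⟨empty_subset P, by simp⟩), card_empty, pow_zero]
  rw [h, sum_chains_erase_empty, sub_eq_add_neg, ← sum_neg_distrib]
  congr 1
  refine sum_congr rfl fun x hx => ?_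
  rw [← chainSum_filter_le_singleton hx, chainSum]
  simp only [singleton_subset_iff]

end Chains

theorem Finset.Ioo_filter_lt_of_le_right {β : Type*} [PartialOrder β] [LocallyFiniteOrder β]
    [DecidableLT β] {a b c : β} (hcb : c ≤ b) : {x ∈ Ioo a b | x < c} = Ioo a c := by
  grind

theorem Finset.Ioo_filter_gt_of_left_le {β : Type*} [PartialOrder β] [LocallyFiniteOrder β]
    [DecidableLT β] {a b c : β} (hac : a ≤ c) : {x ∈ Ioo a b | c < x} = Ioo c b := by
  grind

section Boolean

theorem sum_Icc_neg_one_pow_card {a b : Finset α} (h : a < b) :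
    ∑ y ∈ Icc a b, (-1 : ℤ) ^ #y = 0 := by
  have hdisj : ∀ u ∈ (b \ a).powerset, Disjoint a u := fun u hu =>
    disjoint_sdiff.mono_right (mem_powerset.1 hu)
  rw [Icc_eq_image_powerset h.le, sum_image fun u hu v hv huv => by
    rw [← union_sdiff_cancel_left (hdisj u hu), huv, union_sdiff_cancel_left (hdisj v hv)]]
  calc ∑ u ∈ (b \ a).powerset, (-1 : ℤ) ^ #(a ∪ u)
      = ∑ u ∈ (b \ a).powerset, (-1) ^ #a * (-1) ^ #u :=
        sum_congr rfl fun u hu => by rw [card_union_of_disjoint (hdisj u hu), pow_add]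
    _ = 0 := by
      rw [← mul_sum, sum_powerset_neg_one_pow_card_of_nonempty (sdiff_nonempty.2 h.not_ge),
        mul_zero]

theorem chainSum_Ioo_empty {a b : Finset α} (h : a < b) :
    chainSum (Ioo a b) ∅ = (-1) ^ (#a + #b + 1) := by
  induction b using Finset.strongInduction with
  | H b ih =>
  have hterm : ∀ x ∈ Ioo a b, chainSum {y ∈ Ioo a b | y < x} ∅ = -((-1) ^ #a * (-1) ^ #x) := by
    intro x hx
    obtain ⟨hax, hxb⟩ := mem_Ioo.1 hx
    rw [Ioo_filter_lt_of_le_right hxb.le, ih x hxb hax, pow_succ, pow_add]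
    ring
  have hIcc := sum_Icc_neg_one_pow_card h
  rw [← Ico_insert_right h.le, sum_insert right_notMem_Ico, ← Ioo_insert_left h,
    sum_insert left_notMem_Ioo] at hIcc
  rw [chainSum_empty, sum_congr rfl hterm, sum_neg_distrib, ← mul_sum]
  linear_combination (-1) ^ #a * hIcc - (Even.add_self #a).neg_one_pow (α := ℤ)

theorem chainSum_Ioo {a b : Finset α} (h : a < b) {d : Finset (Finset α)}
    (hd : d ∈ chains (Ioo a b)) : chainSum (Ioo a b) d = (-1) ^ (#a + #b + 1) := by
  induction d using Finset.strongInduction generalizing a b with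
  | H d ih =>
  obtain rfl | ⟨w, hw⟩ := d.eq_empty_or_nonempty
  · exact chainSum_Ioo_empty h
  obtain ⟨hdP, hdc⟩ := mem_chains.1 hd
  obtain ⟨haw, hwb⟩ := mem_Ioo.1 (hdP hw)
  have hlow : {y ∈ d | y < w} ∈ chains (Ioo a w) := mem_chains.2
    ⟨fun y hy => mem_Ioo.2 ⟨(mem_Ioo.1 (hdP (mem_filter.1 hy).1)).1, (mem_filter.1 hy).2⟩,
      hdc.mono (coe_subset.2 (filter_subset _ _))⟩
  have hup : {y ∈ d | w < y} ∈ chains (Ioo w b) := mem_chains.2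
    ⟨fun y hy => mem_Ioo.2 ⟨(mem_filter.1 hy).2, (mem_Ioo.1 (hdP (mem_filter.1 hy).1)).2⟩,
      hdc.mono (coe_subset.2 (filter_subset _ _))⟩
  have hlow_ss : {y ∈ d | y < w} ⊂ d := filter_ssubset.2 ⟨w, hw, lt_irrefl w⟩
  have hup_ss : {y ∈ d | w < y} ⊂ d := filter_ssubset.2 ⟨w, hw, lt_irrefl w⟩
  rw [chainSum_eq_neg_mul hdc hw (hdP hw), Ioo_filter_lt_of_le_right hwb.le,
    Ioo_filter_gt_of_left_le haw.le, ih _ hlow_ss haw hlow, ih _ hup_ss hwb hup]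
  linear_combination (-(-1) ^ #a * (-1) ^ #b) * (Even.add_self #w).neg_one_pow (α := ℤ)

end Boolean

theorem neg_one_pow_pred {n : ℕ} (hn : n ≠ 0) : (-1 : ℤ) ^ (n - 1) = -(-1) ^ n := by
  obtain ⟨k, rfl⟩ := Nat.exists_eq_succ_of_ne_zero hn
  simp [pow_succ]

section Complex

def eulerChar (A : Finset (Finset α)) : ℤ :=
  ∑ x ∈ A, (-1) ^ (#x - 1)

variable {A : Finset (Finset α)}

theorem IsComplex.Ioo_subset (hA : IsComplex A) {y : Finset α} (hy : y ∈ A) (x : Finset α) :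
    Ioo x y ⊆ A := fun z hz =>
  hA.2 y hy z (mem_Ioo.1 hz).2.le
    (empty_ssubset.1 ((empty_subset x).trans_ssubset (mem_Ioo.1 hz).1))

theorem IsComplex.filter_lt_eq_Ioo (hA : IsComplex A) {x : Finset α} (hx : x ∈ A) :
    {y ∈ A | y < x} = Ioo ∅ x := by
  ext y
  simp only [mem_filter, mem_Ioo]
  exact ⟨fun ⟨hy, hyx⟩ => ⟨empty_ssubset.2 (hA.1 y hy), hyx⟩,
    fun h => ⟨hA.Ioo_subset hx ∅ (mem_Ioo.2 h), h.2⟩⟩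

theorem IsComplex.eulerChar_starC (hA : IsComplex A) {x : Finset α} (hx : x ∈ A) :
    eulerChar (starC A x) = (-1) ^ (#x + 1) * chainSum {y ∈ A | x < y} ∅ := by
  have hstar : starC A x = insert x {y ∈ A | x < y} := by
    ext y
    simp only [starC, mem_filter, mem_insert]
    constructor
    · rintro ⟨hy, hxy⟩
      exact (eq_or_ssubset_of_subset hxy).imp Eq.symm fun h => ⟨hy, h⟩
    · rintro (rfl | ⟨hy, hxy⟩)
      exacts [⟨hx, subset_rfl⟩, ⟨hy, hxy.subset⟩]
  have hterm : ∀ y ∈ {y ∈ A | x < y},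
      -((-1) ^ (#x + 1) * chainSum {z ∈ {y ∈ A | x < y} | z < y} ∅) = (-1) ^ (#y - 1) := by
    intro y hy
    obtain ⟨hyA, hxy⟩ := mem_filter.1 hy
    have hIoo : {z ∈ {y ∈ A | x < y} | z < y} = Ioo x y := by
      rw [filter_filter]
      ext z
      simp only [mem_filter, mem_Ioo]
      exact ⟨fun ⟨_, h⟩ => h, fun h => ⟨hA.Ioo_subset hyA x (mem_Ioo.2 h), h⟩⟩
    rw [hIoo, chainSum_Ioo_empty hxy, neg_one_pow_pred (card_ne_zero.2 (hA.1 y hyA))]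
    linear_combination -(-1) ^ #y * (Even.add_self #x).neg_one_pow (α := ℤ)
  rw [hstar, eulerChar, sum_insert (by simp), chainSum_empty, mul_sub, mul_sum, mul_one,
    sub_eq_add_neg, ← sum_neg_distrib, sum_congr rfl hterm,
    neg_one_pow_pred (card_ne_zero.2 (hA.1 x hx)), pow_succ, mul_neg_one]

theorem IsComplex.eulerChar_filter_subset (hA : IsComplex A) {s : Finset α}
    (hs : s.Nonempty → s ∈ A) : eulerChar {z ∈ A | z ⊆ s} = if s ∈ A then 1 else 0 := by
  by_cases hsA : s ∈ A
  · have hfaces : {z ∈ A | z ⊆ s} = s.powerset.erase ∅ := by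
      ext z
      simp only [mem_filter, mem_erase, mem_powerset, ← nonempty_iff_ne_empty]
      exact ⟨fun ⟨hz, hzs⟩ => ⟨hA.1 z hz, hzs⟩, fun ⟨hz, hzs⟩ => ⟨hA.2 s hsA z hzs hz, hzs⟩⟩
    rw [if_pos hsA, hfaces, eulerChar, sum_congr rfl fun z hz =>
      neg_one_pow_pred (card_ne_zero.2 (nonempty_iff_ne_empty.2 (ne_of_mem_erase hz))),
      sum_neg_distrib, sum_erase_eq_sub (empty_mem_powerset s),
      sum_powerset_neg_one_pow_card_of_nonempty (hA.1 s hsA)]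
    simp
  · obtain rfl : s = ∅ := not_nonempty_iff_eq_empty.1 (mt hs hsA)
    rw [if_neg hsA, filter_false_of_mem fun z hz hz' => (hA.1 z hz).ne_empty (subset_empty.1 hz')]
    rfl

theorem interTuple_subset {m : ℕ} (X : Fin m → Finset α) (j : Fin m) : interTuple X ⊆ X j :=
  fun _ hv => (mem_filter.1 hv).2 j

theorem subset_interTuple_iff {m : ℕ} (hm : 0 < m) {X : Fin m → Finset α} {z : Finset α} :
    z ⊆ interTuple X ↔ ∀ j, z ⊆ X j :=
  ⟨fun h j => h.trans (interTuple_subset X j), fun h _ hv =>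
    mem_filter.2 ⟨mem_sup.2 ⟨⟨0, hm⟩, mem_univ _, h _ hv⟩, fun j => h j hv⟩⟩

theorem IsComplex.wm_eq_sum_eulerChar_starC (hA : IsComplex A) {m : ℕ} (hm : 0 < m) :
    wm m A = ∑ z ∈ A, (-1) ^ (#z - 1) * eulerChar (starC A z) ^ m := by
  calc wm m A = ∑ X ∈ Fintype.piFinset fun _ : Fin m => A, ∑ z ∈ A with z ⊆ interTuple X,
        (-1) ^ (#z - 1) * ∏ j, (-1) ^ (#(X j) - 1) := by
        refine sum_congr rfl fun X hX => ?_
        rw [← sum_mul, ← eulerChar, hA.eulerChar_filter_subset fun hne =>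
          hA.2 _ (Fintype.mem_piFinset.1 hX ⟨0, hm⟩) _ (interTuple_subset X _) hne, boole_mul]
    _ = ∑ z ∈ A, ∑ X ∈ Fintype.piFinset fun _ : Fin m => starC A z,
        (-1) ^ (#z - 1) * ∏ j, (-1) ^ (#(X j) - 1) := by
        refine sum_comm' fun X z => ?_
        simp only [mem_filter, Fintype.mem_piFinset, starC, subset_interTuple_iff hm, forall_and]
        tauto
    _ = ∑ z ∈ A, (-1) ^ (#z - 1) * eulerChar (starC A z) ^ m := by
        simp only [← mul_sum, eulerChar, sum_pow']

end Complex

section Barycentric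

variable {G : Finset (Finset ℕ)}

theorem bary_eq_erase_empty (G : Finset (Finset ℕ)) : bary G = (chains G).erase ∅ := by
  ext c
  simp only [bary, chains, mem_filter, mem_erase, mem_powerset, nonempty_iff_ne_empty]
  tauto

theorem bary_isComplex (G : Finset (Finset ℕ)) : IsComplex (bary G) := by
  refine ⟨fun c hc => nonempty_iff_ne_empty.2 (ne_of_mem_erase (bary_eq_erase_empty G ▸ hc)),
    fun c hc d hdc hd => ?_⟩
  rw [bary_eq_erase_empty, mem_erase, mem_chains] at hc ⊢
  exact ⟨hd.ne_empty, hdc.trans hc.2.1, hc.2.2.mono (coe_subset.2 hdc)⟩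

theorem IsComplex.eulerChar_starC_bary (hG : IsComplex G) {x : Finset ℕ} {d : Finset (Finset ℕ)}
    (hd : d ∈ chains {y ∈ G | y ≤ x}) (hx : x ∈ d) :
    eulerChar (starC (bary G) d) = eulerChar (starC G x) := by
  obtain ⟨hdG, hdc⟩ := mem_chains.1 hd
  have hxG : x ∈ G := (mem_filter.1 (hdG hx)).1
  have hstar : eulerChar (starC (bary G) d) = -chainSum G d := by
    have hfaces : starC (bary G) d = {f ∈ chains G | d ⊆ f} := by
      ext f
      simp only [starC, bary_eq_erase_empty, mem_filter, mem_erase]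
      exact ⟨fun h => ⟨h.1.2, h.2⟩, fun h => ⟨⟨ne_empty_of_mem (h.2 hx), h.1⟩, h.2⟩⟩
    rw [hfaces, eulerChar, chainSum, ← sum_neg_distrib]
    exact sum_congr rfl fun f hf => neg_one_pow_pred (card_ne_zero.2 ⟨x, (mem_filter.1 hf).2 hx⟩)
  have hlow : {y ∈ d | y < x} ∈ chains (Ioo ∅ x) := by
    rw [← hG.filter_lt_eq_Ioo hxG, mem_chains]
    exact ⟨filter_subset_filter _ fun y hy => (mem_filter.1 (hdG hy)).1,
      hdc.mono (coe_subset.2 (filter_subset _ _))⟩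
  have hup : {y ∈ d | x < y} = ∅ :=
    filter_false_of_mem fun y hy => ((mem_filter.1 (hdG hy)).2).not_gt
  rw [hstar, chainSum_eq_neg_mul hdc hx hxG, hG.filter_lt_eq_Ioo hxG, hup,
    chainSum_Ioo (empty_ssubset.2 (hG.1 x hxG)) hlow, hG.eulerChar_starC hxG, card_empty, zero_add]
  ring

theorem IsComplex.sum_chains_with_top (hG : IsComplex G) {x : Finset ℕ} (hx : x ∈ G) :
    ∑ d ∈ chains {y ∈ G | y ≤ x} with x ∈ d, (-1 : ℤ) ^ (#d - 1) = (-1) ^ (#x - 1) := by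
  have hx₀ : #x ≠ 0 := card_ne_zero.2 (hG.1 x hx)
  calc ∑ d ∈ chains {y ∈ G | y ≤ x} with x ∈ d, (-1 : ℤ) ^ (#d - 1)
      = -chainSum {y ∈ G | y ≤ x} {x} := by
        simp only [chainSum, singleton_subset_iff, ← sum_neg_distrib]
        exact sum_congr rfl fun d hd => neg_one_pow_pred (card_ne_zero.2 ⟨x, (mem_filter.1 hd).2⟩)
    _ = (-1) ^ (#x - 1) := by
        rw [chainSum_filter_le_singleton hx, neg_neg, hG.filter_lt_eq_Ioo hx,
          chainSum_Ioo_empty (empty_ssubset.2 (hG.1 x hx)), card_empty, zero_add,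
          neg_one_pow_pred hx₀, pow_succ, mul_neg_one]

end Barycentric

/-- Barycentric invariance: `w_m(G₁) = w_m(G)` for all `m ≥ 1`. -/
theorem barycentric_invariance (G : Finset (Finset ℕ)) (hG : IsComplex G)
    (m : ℕ) (hm : 1 ≤ m) :
    wm m (bary G) = wm m G := by
  calc wm m (bary G) = ∑ d ∈ bary G, (-1) ^ (#d - 1) * eulerChar (starC (bary G) d) ^ m :=
        (bary_isComplex G).wm_eq_sum_eulerChar_starC hm
    _ = ∑ x ∈ G, ∑ d ∈ chains {y ∈ G | y ≤ x} with x ∈ d,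
          (-1) ^ (#d - 1) * eulerChar (starC (bary G) d) ^ m := by
        rw [← sum_chains_erase_empty, bary_eq_erase_empty]
    _ = ∑ x ∈ G, (-1) ^ (#x - 1) * eulerChar (starC G x) ^ m := by
        refine sum_congr rfl fun x hx => ?_
        rw [← hG.sum_chains_with_top hx, sum_mul]
        refine sum_congr rfl fun d hd => ?_
        rw [hG.eulerChar_starC_bary (mem_filter.1 hd).1 (mem_filter.1 hd).2]
    _ = wm m G := (hG.wm_eq_sum_eulerChar_starC hm).symm
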